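/- Let k ≥ 2 be a fixed integer, let Ω = {(x,y) ∈ ℝ² : 0 ≤ x ≤ y ≤ 1}, and let P ⊆ Ω be the convex hull of a finite set of points of Ω. For n ∈ ℕ let V_{n,k}(P) = {X ⊆ {0,1,...,n} : |X| = k and (min(X)/n, max(X)/n) ∈ P}. Then |V_{n,k}(P)| / n^k → (1/(k-2)!) ∬_P (y-x)^{k-2} dx dy as n → ∞. -/

import Mathlib

open MeasureTheory

/-- The maximum element of a finite set of naturals (`0` for the empty set). -/
def fmax (X : Finset ℕ) : ℕ := WithBot.unbotD 0 X.max

/-- The minimum element of a finite set of naturals (`0` for the empty set). -/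
def fmin (X : Finset ℕ) : ℕ := WithTop.untopD 0 X.min

/-!
A `k`-subset of `{0, …, n}` with minimum `a` and maximum `b > a` is `{a, b}` together with a
`(k - 2)`-subset of the open interval `(a, b)`, so there are `C(b - a - 1, k - 2)` of them; and
`C(d - 1, k - 2) / n ^ (k - 2) = (d / n) ^ (k - 2) / (k - 2)! + O(1 / n)` uniformly in `d ≤ n`.
Hence `|V_{n,k}(P)| / n ^ k` is, up to `O(1 / n)`, the Riemann sum with mesh `1 / n` of
`(y - x) ^ (k - 2) / (k - 2)!` over the grid points of `P` strictly above the diagonal. These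
Riemann sums converge to the integral because the frontier of a convex set is Lebesgue-null, and
so is the diagonal.
-/

open Finset Filter Topology
open scoped Pointwise Nat

lemma fmin_eq_min' {X : Finset ℕ} (hX : X.Nonempty) : fmin X = X.min' hX := by
  rw [fmin, ← coe_min' hX]; rfl

lemma fmax_eq_max' {X : Finset ℕ} (hX : X.Nonempty) : fmax X = X.max' hX := by
  rw [fmax, ← coe_max' hX]; rfl

lemma fmin_eq_and_fmax_eq_iff {X : Finset ℕ} (hX : X.Nonempty) {a b : ℕ} :
    fmin X = a ∧ fmax X = b ↔ a ∈ X ∧ b ∈ X ∧ X ⊆ Icc a b := by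
  rw [fmin_eq_min' hX, fmax_eq_max' hX, min'_eq_iff, max'_eq_iff, subset_iff]
  simp only [mem_Icc]
  grind

lemma fmin_lt_fmax {X : Finset ℕ} (hX : 2 ≤ #X) : fmin X < fmax X := by
  obtain ⟨-, -, hsub⟩ := (fmin_eq_and_fmax_eq_iff (X := X) (card_pos.mp (by omega))).mp ⟨rfl, rfl⟩
  have := card_le_card hsub
  rw [Nat.card_Icc] at this
  omega

lemma insert_insert_inter_Ioo {X : Finset ℕ} {a b : ℕ} (ha : a ∈ X) (hb : b ∈ X)
    (hX : X ⊆ Icc a b) : insert a (insert b (X ∩ Ioo a b)) = X := by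
  ext x
  have := @hX x
  simp only [mem_insert, mem_inter, mem_Ioo, mem_Icc] at this ⊢
  grind

lemma card_insert_insert_of_subset_Ioo {Y : Finset ℕ} {a b : ℕ} (hab : a < b)
    (hY : Y ⊆ Ioo a b) : #(insert a (insert b Y)) = #Y + 2 := by
  have hb : b ∉ Y := fun h => by simpa using (mem_Ioo.mp (hY h)).2
  have ha : a ∉ insert b Y := by
    simp only [mem_insert, not_or]
    exact ⟨hab.ne, fun h => by simpa using (mem_Ioo.mp (hY h)).1⟩
  rw [card_insert_of_notMem ha, card_insert_of_notMem hb]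

theorem card_filter_fmin_fmax_eq_choose {n k a b : ℕ} (hk : 2 ≤ k) (hab : a < b) (hbn : b ≤ n) :
    #{X ∈ (range (n + 1)).powerset | #X = k ∧ (fmin X, fmax X) = (a, b)} =
      (b - a - 1).choose (k - 2) := by
  have hIcc : Icc a b ⊆ range (n + 1) := fun x hx => by
    simp only [mem_Icc, mem_range] at hx ⊢; omega
  have hfiber : ∀ X ∈ ({X ∈ (range (n + 1)).powerset | #X = k ∧ (fmin X, fmax X) = (a, b)} :
      Finset (Finset ℕ)), #X = k ∧ a ∈ X ∧ b ∈ X ∧ X ⊆ Icc a b := by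
    intro X hX
    simp only [mem_filter, mem_powerset, Prod.mk.injEq] at hX
    exact ⟨hX.2.1, (fmin_eq_and_fmax_eq_iff (card_pos.mp (by omega))).mp hX.2.2⟩
  rw [← Nat.card_Ioo, ← card_powersetCard]
  symm
  apply card_nbij' (fun Y => insert a (insert b Y)) (fun X => X ∩ Ioo a b)
  · intro Y hY
    simp only [mem_coe, mem_powersetCard, mem_filter, mem_powerset] at hY ⊢
    have hX : insert a (insert b Y) ⊆ Icc a b :=
      insert_subset (by simp [hab.le]) <| insert_subset (by simp [hab.le])
        (hY.1.trans Ioo_subset_Icc_self)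
    refine ⟨hX.trans hIcc, by rw [card_insert_insert_of_subset_Ioo hab hY.1]; omega, ?_⟩
    rw [Prod.mk.injEq, fmin_eq_and_fmax_eq_iff (insert_nonempty _ _)]
    exact ⟨mem_insert_self _ _, mem_insert_of_mem (mem_insert_self _ _), hX⟩
  · intro X hX
    obtain ⟨hcard, ha, hb, hsub⟩ := hfiber X hX
    refine mem_powersetCard.mpr ⟨inter_subset_right, ?_⟩
    dsimp only
    have := card_insert_insert_of_subset_Ioo hab (inter_subset_right (s₁ := X))
    rw [insert_insert_inter_Ioo ha hb hsub] at this
    omega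
  · intro Y hY
    ext x
    have := @(mem_powersetCard.mp hY).1 x
    simp only [mem_inter, mem_insert, mem_Ioo] at this ⊢
    grind
  · intro X hX
    obtain ⟨-, ha, hb, hsub⟩ := hfiber X hX
    exact insert_insert_inter_Ioo ha hb hsub

def grid (n : ℕ) : Finset (ℕ × ℕ) := range (n + 1) ×ˢ range (n + 1)

noncomputable def gridPoint (n : ℕ) (p : ℕ × ℕ) : ℝ × ℝ := ((p.1 : ℝ) / n, (p.2 : ℝ) / n)

lemma gridPoint_fst_lt_snd_iff {n : ℕ} (hn : 0 < n) {p : ℕ × ℕ} :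
    (gridPoint n p).1 < (gridPoint n p).2 ↔ p.1 < p.2 := by
  rw [gridPoint, div_lt_div_iff_of_pos_right (by exact_mod_cast hn), Nat.cast_lt]

theorem card_filter_fmin_fmax_eq_sum_choose {n k : ℕ} (hk : 2 ≤ k) (Q : ℕ × ℕ → Prop)
    [DecidablePred Q] :
    #{X ∈ (range (n + 1)).powerset | #X = k ∧ Q (fmin X, fmax X)} =
      ∑ p ∈ grid n with Q p ∧ p.1 < p.2, (p.2 - p.1 - 1).choose (k - 2) := by
  rw [card_eq_sum_card_fiberwise (f := fun X => (fmin X, fmax X))]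
  · refine sum_congr rfl fun p hp => ?_
    simp only [grid, mem_filter, mem_product, mem_range] at hp
    rw [filter_filter, ← card_filter_fmin_fmax_eq_choose (n := n) hk hp.2.2 (by omega)]
    congr 1
    refine filter_congr fun X _ => ?_
    grind
  · intro X hX
    simp only [coe_filter, mem_powerset, Set.mem_ofPred_eq, grid, mem_product, mem_range] at hX ⊢
    obtain ⟨hsub, hcard, hQ⟩ := hX
    obtain ⟨hmin, hmax, -⟩ :=
      (fmin_eq_and_fmax_eq_iff (X := X) (card_pos.mp (by omega))).mp ⟨rfl, rfl⟩
    exact ⟨⟨mem_range.mp (hsub hmin), mem_range.mp (hsub hmax)⟩, hQ, fmin_lt_fmax (by omega)⟩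

lemma natCard_setOf_subset_and {α : Type*} (s : Finset α) (p : Finset α → Prop)
    [DecidablePred p] : Nat.card {X : Finset α | X ⊆ s ∧ p X} = #{X ∈ s.powerset | p X} := by
  rw [← Set.ncard_coe_finset, ← Nat.card_coe_set_eq]
  congr; ext X; simp

theorem natCard_setOf_gridPoint_fmin_fmax_mem {n k : ℕ} (hk : 2 ≤ k) (hn : 0 < n)
    (P : Set (ℝ × ℝ)) [DecidablePred (· ∈ P)] :
    Nat.card {X : Finset ℕ | X ⊆ range (n + 1) ∧ #X = k ∧ gridPoint n (fmin X, fmax X) ∈ P} =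
      ∑ p ∈ grid n with gridPoint n p ∈ P ∩ {x | x.1 < x.2}, (p.2 - p.1 - 1).choose (k - 2) := by
  rw [natCard_setOf_subset_and (range (n + 1)) fun X => #X = k ∧ gridPoint n (fmin X, fmax X) ∈ P,
    card_filter_fmin_fmax_eq_sum_choose hk fun p => gridPoint n p ∈ P]
  exact sum_congr (filter_congr fun p _ => and_congr_right' (gridPoint_fst_lt_snd_iff hn).symm)
    fun _ _ => rfl

lemma abs_choose_div_pow_sub_le {j d n : ℕ} (hd : 1 ≤ d) (hdn : d ≤ n) :
    |((d - 1).choose j : ℝ) / n ^ j - 1 / j ! * ((d : ℝ) / n) ^ j| ≤ j ^ 2 / n := by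
  have hn : (0 : ℝ) < n := by exact_mod_cast hd.trans hdn
  set u : ℝ := d / n
  set v : ℝ := ((d - j : ℕ) : ℝ) / n
  have hD : (((d - 1).descFactorial j : ℕ) : ℝ) = j ! * (d - 1).choose j := by
    exact_mod_cast Nat.descFactorial_eq_factorial_mul_choose (d - 1) j
  have hlow : v ^ j ≤ (d - 1).descFactorial j / n ^ j := by
    have := Nat.pow_sub_le_descFactorial (d - 1) j
    rw [Nat.sub_add_cancel hd] at this
    rw [div_pow]; gcongr; exact_mod_cast this
  have hup : (d - 1).descFactorial j / n ^ j ≤ u ^ j := by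
    rw [div_pow]; gcongr
    exact_mod_cast (Nat.descFactorial_le_pow _ _).trans (Nat.pow_le_pow_left (Nat.sub_le d 1) j)
  set D : ℝ := (d - 1).descFactorial j / n ^ j
  have hu : |u| ≤ 1 := by
    rw [abs_of_nonneg (by positivity), div_le_one hn]; exact_mod_cast hdn
  have hv : |v| ≤ 1 := by
    rw [abs_of_nonneg (by positivity), div_le_one hn]; exact_mod_cast (Nat.sub_le d j).trans hdn
  have huv : |u - v| ≤ j / n := by
    rw [← sub_div, abs_div, abs_of_pos hn, ← Nat.cast_sub (Nat.sub_le d j), Nat.abs_cast]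
    gcongr
    exact_mod_cast (by omega : d - (d - j) ≤ j)
  have hpow : u ^ j - v ^ j ≤ j ^ 2 / n :=
    calc u ^ j - v ^ j ≤ |u - v| * j * max |u| |v| ^ (j - 1) :=
          (le_abs_self _).trans (abs_pow_sub_pow_le u v j)
      _ ≤ j / n * j * 1 := by gcongr; exact pow_le_one₀ (by positivity) (max_le hu hv)
      _ = j ^ 2 / n := by ring
  have hfac : (1 : ℝ) ≤ j ! := by exact_mod_cast Nat.one_le_iff_ne_zero.mpr j.factorial_ne_zero
  have heq : ((d - 1).choose j : ℝ) / n ^ j - 1 / j ! * u ^ j = -((u ^ j - D) / j !) := by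
    simp only [D, hD]; field_simp; ring
  rw [heq, abs_neg, abs_of_nonneg (div_nonneg (sub_nonneg.2 hup) (by positivity))]
  calc (u ^ j - D) / j ! ≤ u ^ j - D := div_le_self (by linarith) hfac
    _ ≤ j ^ 2 / n := by linarith

lemma abs_choose_div_pow_sub_gridPoint_le {n j : ℕ} {p : ℕ × ℕ} (hp : p ∈ grid n)
    (hlt : p.1 < p.2) :
    |((p.2 - p.1 - 1).choose j : ℝ) / n ^ j - 1 / j ! * ((gridPoint n p).2 - (gridPoint n p).1) ^ j|
      ≤ j ^ 2 / n := by
  simp only [grid, mem_product, mem_range] at hp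
  simp only [gridPoint]
  rw [← sub_div, ← Nat.cast_sub hlt.le]
  exact abs_choose_div_pow_sub_le (by omega) (by omega)

theorem preimage_finTwoArrow_inter_smul_span_eq {P : Set (ℝ × ℝ)} (hP : P ⊆ Set.Icc 0 1) (n : ℕ)
    [NeZero n] [DecidablePred (· ∈ P)] :
    (Homeomorph.finTwoArrow : (Fin 2 → ℝ) ≃ₜ ℝ × ℝ) ⁻¹' P ∩
        (n : ℝ)⁻¹ • ((Submodule.span ℤ (Set.range (Pi.basisFun ℝ (Fin 2))) :
          Submodule ℤ (Fin 2 → ℝ)) : Set (Fin 2 → ℝ)) =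
      ({p ∈ grid n | gridPoint n p ∈ P}.image fun p => ![(p.1 : ℝ) / n, (p.2 : ℝ) / n]) := by
  have hn : (0 : ℝ) < n := by exact_mod_cast Nat.pos_of_neZero n
  have grid_coord : ∀ t : ℝ, 0 ≤ t → t ≤ 1 → (n : ℝ) * t ∈ Set.range (algebraMap ℤ ℝ) →
      ∃ a : ℕ, a < n + 1 ∧ (a : ℝ) / n = t := by
    rintro t ht₀ ht₁ ⟨z, hz⟩
    rw [eq_intCast] at hz
    have hz₀ : (0 : ℝ) ≤ z := by rw [hz]; positivity
    have hzn : (z : ℝ) ≤ n := by rw [hz]; nlinarith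
    lift z to ℕ using (by exact_mod_cast hz₀)
    refine ⟨z, by exact_mod_cast Nat.lt_succ_of_le (by exact_mod_cast hzn), ?_⟩
    rw [Int.cast_natCast] at hz
    rw [div_eq_iff hn.ne', hz, mul_comm]
  ext x
  simp only [Set.mem_inter_iff, Set.mem_preimage, Homeomorph.finTwoArrow_apply,
    ← Submodule.coe_pointwise_smul, SetLike.mem_coe, BoxIntegral.unitPartition.mem_smul_span_iff,
    Fin.forall_fin_two, coe_image, coe_filter, Set.mem_image, grid, mem_product, mem_range]
  constructor
  · rintro ⟨hxP, h₀, h₁⟩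
    obtain ⟨⟨hx₀, hx₁⟩, ⟨hx₀', hx₁'⟩⟩ := hP hxP
    obtain ⟨a, ha, hax⟩ := grid_coord _ hx₀ hx₀' h₀
    obtain ⟨b, hb, hbx⟩ := grid_coord _ hx₁ hx₁' h₁
    refine ⟨(a, b), ⟨⟨ha, hb⟩, by simpa [gridPoint, hax, hbx] using hxP⟩, ?_⟩
    ext i; fin_cases i <;> simp [hax, hbx]
  · rintro ⟨p, ⟨-, hpP⟩, rfl⟩
    refine ⟨hpP, ⟨p.1, ?_⟩, ⟨p.2, ?_⟩⟩ <;> simp [field]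

theorem tendsto_sum_gridPoint_div_sq {P : Set (ℝ × ℝ)} [DecidablePred (· ∈ P)]
    (hP : P ⊆ Set.Icc 0 1) (hPm : MeasurableSet P) (hPfr : volume (frontier P) = 0)
    {F : ℝ × ℝ → ℝ} (hF : Continuous F) :
    Tendsto (fun n : ℕ => (∑ p ∈ grid n with gridPoint n p ∈ P, F (gridPoint n p)) / n ^ 2)
      atTop (𝓝 (∫ x in P, F x)) := by
  let e : (Fin 2 → ℝ) ≃ₜ ℝ × ℝ := Homeomorph.finTwoArrow
  have he : MeasurePreserving e := volume_preserving_finTwoArrow ℝ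
  have hbdd : Bornology.IsBounded (e ⁻¹' P) := by
    refine (Metric.isBounded_Icc (0 : Fin 2 → ℝ) 1).subset fun x hx => ?_
    obtain ⟨⟨h₀, h₁⟩, ⟨h₀', h₁'⟩⟩ := hP hx
    exact ⟨Fin.forall_fin_two.2 ⟨h₀, h₁⟩, Fin.forall_fin_two.2 ⟨h₀', h₁'⟩⟩
  have hfr : volume (frontier (e ⁻¹' P)) = 0 := by
    rw [← e.preimage_frontier,
      he.measure_preimage isClosed_frontier.measurableSet.nullMeasurableSet, hPfr]
  have hlattice := tendsto_tsum_div_pow_atTop_integral (e ⁻¹' P) (fun x => F (e x))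
    (hF.comp e.continuous) hbdd (hPm.preimage e.continuous.measurable) hfr
  rw [he.setIntegral_preimage_emb e.measurableEmbedding] at hlattice
  refine hlattice.congr' ?_
  filter_upwards [eventually_ge_atTop 1] with n hn
  have : NeZero n := ⟨by omega⟩
  rw [Fintype.card_fin, preimage_finTwoArrow_inter_smul_span_eq hP n,
    Finset.tsum_subtype' _ (fun x => F (e x)), sum_image]
  · rfl
  · intro p _ q _ hpq
    have h₀ := congrFun hpq 0
    have h₁ := congrFun hpq 1
    have hn₀ : (n : ℝ) ≠ 0 := by positivity
    simp only [Matrix.cons_val_zero, Matrix.cons_val_one, div_left_inj' hn₀, Nat.cast_inj] at h₀ h₁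
    exact Prod.ext h₀ h₁

lemma volume_setOf_fst_eq_snd : volume {x : ℝ × ℝ | x.1 = x.2} = 0 := by
  have hker : {x : ℝ × ℝ | x.1 = x.2} =
      LinearMap.ker (LinearMap.fst ℝ ℝ ℝ - LinearMap.snd ℝ ℝ ℝ) := by
    ext x; simp [sub_eq_zero]
  rw [hker]
  refine Measure.addHaar_submodule volume _ fun htop => ?_
  have : ((1, 0) : ℝ × ℝ) ∈ LinearMap.ker (LinearMap.fst ℝ ℝ ℝ - LinearMap.snd ℝ ℝ ℝ) :=
    htop ▸ trivial
  simp at this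

lemma volume_frontier_inter_setOf_fst_lt_snd {P : Set (ℝ × ℝ)} (hP : volume (frontier P) = 0) :
    volume (frontier (P ∩ {x | x.1 < x.2})) = 0 := by
  refine measure_mono_null ((frontier_inter_subset _ _).trans ?_)
    (measure_union_null hP volume_setOf_fst_eq_snd)
  exact Set.union_subset_union Set.inter_subset_left
    (Set.inter_subset_right.trans (frontier_lt_subset_eq continuous_fst continuous_snd))

lemma setIntegral_inter_setOf_fst_lt_snd {P : Set (ℝ × ℝ)} (hP : P ⊆ {x | x.1 ≤ x.2})
    (f : ℝ × ℝ → ℝ) : ∫ x in P ∩ {x | x.1 < x.2}, f x = ∫ x in P, f x := by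
  refine setIntegral_congr_set (ae_eq_set.mpr ⟨?_, measure_mono_null ?_ volume_setOf_fst_eq_snd⟩)
  · rw [Set.sdiff_eq_empty.mpr Set.inter_subset_left, measure_empty]
  · intro x ⟨hxP, hx⟩
    simp only [Set.mem_inter_iff, hxP, true_and, Set.mem_ofPred_eq, not_lt] at hx
    exact le_antisymm (hP hxP) hx

theorem tendsto_sum_gridPoint_above_diagonal_div_sq {P : Set (ℝ × ℝ)} [DecidablePred (· ∈ P)]
    (hP : P ⊆ {p | 0 ≤ p.1 ∧ p.1 ≤ p.2 ∧ p.2 ≤ 1}) (hPm : MeasurableSet P)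
    (hPfr : volume (frontier P) = 0) {F : ℝ × ℝ → ℝ} (hF : Continuous F) :
    Tendsto (fun n : ℕ => (∑ p ∈ grid n with gridPoint n p ∈ P ∩ {x | x.1 < x.2},
      F (gridPoint n p)) / n ^ 2) atTop (𝓝 (∫ x in P, F x)) := by
  rw [← setIntegral_inter_setOf_fst_lt_snd fun x hx => (hP hx).2.1]
  refine tendsto_sum_gridPoint_div_sq (fun x hx => ?_)
    (hPm.inter (measurableSet_lt measurable_fst measurable_snd))
    (volume_frontier_inter_setOf_fst_lt_snd hPfr) hF
  obtain ⟨h₀, h₁, h₂⟩ := hP hx.1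
  simp only [Set.mem_Icc, Prod.le_def, Prod.fst_zero, Prod.snd_zero, Prod.fst_one, Prod.snd_one]
  exact ⟨⟨h₀, by linarith⟩, ⟨by linarith, h₂⟩⟩

lemma tendsto_sum_sub_sum_div_sq_of_abs_le {T : ℕ → Finset (ℕ × ℕ)} (hT : ∀ n, T n ⊆ grid n)
    {f g : ℕ → ℕ × ℕ → ℝ} {C : ℝ} (hC : 0 ≤ C)
    (hfg : ∀ᶠ n in atTop, ∀ p ∈ T n, |f n p - g n p| ≤ C / n) :
    Tendsto (fun n : ℕ => (∑ p ∈ T n, f n p) / n ^ 2 - (∑ p ∈ T n, g n p) / n ^ 2) atTop (𝓝 0) := by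
  refine squeeze_zero_norm' ?_ (by simpa using tendsto_const_div_atTop_nhds_zero_nat (4 * C))
  filter_upwards [hfg, eventually_ge_atTop 1] with n hn hn₁
  have hn₁' : (1 : ℝ) ≤ n := by exact_mod_cast hn₁
  have hcard : (#(T n) : ℝ) ≤ 4 * n ^ 2 := by
    have : #(T n) ≤ (n + 1) * (n + 1) := by simpa [grid] using card_le_card (hT n)
    calc (#(T n) : ℝ) ≤ (n + 1) * (n + 1) := by exact_mod_cast this
      _ ≤ 4 * n ^ 2 := by nlinarith
  rw [Real.norm_eq_abs, ← sub_div, ← sum_sub_distrib, abs_div,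
    abs_of_pos (by positivity : (0 : ℝ) < n ^ 2)]
  calc |∑ p ∈ T n, (f n p - g n p)| / n ^ 2 ≤ #(T n) * (C / n) / n ^ 2 := by
        gcongr
        refine (abs_sum_le_sum_abs _ _).trans ?_
        simpa using sum_le_card_nsmul _ _ _ hn
    _ ≤ 4 * n ^ 2 * (C / n) / n ^ 2 := by gcongr
    _ = 4 * C / n := by field_simp

lemma convex_setOf_zero_le_fst_le_snd_le_one :
    Convex ℝ {p : ℝ × ℝ | 0 ≤ p.1 ∧ p.1 ≤ p.2 ∧ p.2 ≤ 1} := by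
  rintro p ⟨hp₀, hp₁, hp₂⟩ q ⟨hq₀, hq₁, hq₂⟩ a b ha hb hab
  simp only [Set.mem_ofPred_eq, Prod.fst_add, Prod.snd_add, Prod.smul_fst, Prod.smul_snd,
    smul_eq_mul]
  refine ⟨by positivity, by nlinarith, by nlinarith⟩

/-- Let `k ≥ 2` be fixed, `Ω = {(x,y) : 0 ≤ x ≤ y ≤ 1}`, and let `P ⊆ Ω` be the convex
hull of a finite set of points of `Ω`. With
`V_{n,k}(P) = {X ⊆ {0,…,n} : |X| = k, (min X / n, max X / n) ∈ P}`, we have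
`|V_{n,k}(P)| / n^k → (1/(k-2)!) ∬_P (y-x)^{k-2} dx dy` as `n → ∞`. -/
theorem card_Vnk_polygon_asymp (k : ℕ) (hk : 2 ≤ k) (S : Finset (ℝ × ℝ))
    (hS : (S : Set (ℝ × ℝ)) ⊆ {p : ℝ × ℝ | 0 ≤ p.1 ∧ p.1 ≤ p.2 ∧ p.2 ≤ 1}) :
    Filter.Tendsto
      (fun n : ℕ =>
        (Nat.card {X : Finset ℕ | X ⊆ Finset.range (n + 1) ∧ X.card = k ∧
          ((fmin X : ℝ) / (n : ℝ), (fmax X : ℝ) / (n : ℝ)) ∈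
            convexHull ℝ (S : Set (ℝ × ℝ))} : ℝ) / (n : ℝ) ^ k)
      Filter.atTop
      (nhds ((1 / (Nat.factorial (k - 2) : ℝ)) *
        ∫ p in convexHull ℝ (S : Set (ℝ × ℝ)), (p.2 - p.1) ^ (k - 2))) := by
  classical
  set P := convexHull ℝ (S : Set (ℝ × ℝ))
  set j := k - 2
  set T : ℕ → Finset (ℕ × ℕ) := fun n => {p ∈ grid n | gridPoint n p ∈ P ∩ {x | x.1 < x.2}}
  have hRiemann : Tendsto (fun n : ℕ => (∑ p ∈ T n,
      1 / j ! * ((gridPoint n p).2 - (gridPoint n p).1) ^ j) / n ^ 2) atTop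
      (𝓝 (1 / j ! * ∫ x in P, (x.2 - x.1) ^ j)) := by
    rw [← integral_const_mul]
    exact tendsto_sum_gridPoint_above_diagonal_div_sq
      (convexHull_min hS convex_setOf_zero_le_fst_le_snd_le_one)
      (S.finite_toSet.isCompact_convexHull ℝ).isClosed.measurableSet
      ((convex_convexHull ℝ _).addHaar_frontier volume) (by fun_prop)
  have hweights : ∀ᶠ n : ℕ in atTop, ∀ p ∈ T n,
      |((p.2 - p.1 - 1).choose j : ℝ) / n ^ j -
        1 / j ! * ((gridPoint n p).2 - (gridPoint n p).1) ^ j| ≤ (j : ℝ) ^ 2 / n := by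
    filter_upwards [eventually_gt_atTop 0] with n hn p hp
    obtain ⟨hpg, -, hlt⟩ := mem_filter.mp hp
    exact abs_choose_div_pow_sub_gridPoint_le hpg ((gridPoint_fst_lt_snd_iff hn).mp hlt)
  have hcount : ∀ᶠ n : ℕ in atTop,
      (∑ p ∈ T n, ((p.2 - p.1 - 1).choose j : ℝ) / n ^ j) / n ^ 2 =
      (Nat.card {X : Finset ℕ | X ⊆ range (n + 1) ∧ #X = k ∧
        gridPoint n (fmin X, fmax X) ∈ P} : ℝ) / n ^ k := by
    filter_upwards [eventually_gt_atTop 0] with n hn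
    rw [natCard_setOf_gridPoint_fmin_fmax_mem hk hn, Nat.cast_sum, sum_div, sum_div]
    simp only [div_div, ← pow_add, show j + 2 = k by omega]
    rfl
  have hlim := (tendsto_sum_sub_sum_div_sq_of_abs_le (T := T) (fun n => filter_subset _ _)
    (sq_nonneg (j : ℝ)) hweights).add hRiemann
  simp only [sub_add_cancel, zero_add] at hlim
  exact hlim.congr' hcount
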